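/- arXiv:2603.19472 — 3 statements merged into one kernel-verified Lean document; each statement's English description precedes it below -/
import Mathlib

section
/- Let n ≥ 3 be odd and let G be the complete cycle digraph on n nodes (a directed path v_1 → v_2 → ... → v_n together with arcs from every node to v_1, including the self-loop at v_1). Then the majority Boolean automata network A_G solves the density classification task: every configuration with a strict majority of 1s converges under iteration to the all-ones configuration, and every configuration with a strict majority of 0s converges to the all-zeros configuration. -/
/-- Number of `true` entries of `x` inside the finite set `S`. -/
def onesIn {V : Type*} [DecidableEq V] (S : Finset V) (x : V → Bool) : ℕ :=
  (S.filter (fun v => x v = true)).card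

/-- Total number of ones in a configuration. -/
def ones {V : Type*} [Fintype V] [DecidableEq V] (x : V → Bool) : ℕ :=
  onesIn Finset.univ x

/-- Total number of zeros in a configuration. -/
def zeros {V : Type*} [Fintype V] [DecidableEq V] (x : V → Bool) : ℕ :=
  (Finset.univ.filter (fun v => x v = false)).card

/-- One synchronous step of the majority Boolean automata network with
in-neighborhoods `N`: each node takes the majority state among its
in-neighbors, keeping its current state in case of a tie. -/
def majStep {V : Type*} [Fintype V] [DecidableEq V]
    (N : V → Finset V) (x : V → Bool) : V → Bool :=
  fun v =>
    if (N v).card < 2 * onesIn (N v) x then true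
    else if 2 * onesIn (N v) x < (N v).card then false
    else x v

/-- In-neighborhoods of the complete cycle digraph: node 0 sees everyone,
node i (i ≥ 1) sees only node i-1. -/
def ccN (n : ℕ) (v : Fin n) : Finset (Fin n) :=
  if v.val = 0 then Finset.univ
  else Finset.univ.filter (fun u => u.val = v.val - 1)

/-!
A node with a single in-neighbour copies it, so outside `v₁` the network shifts the configuration
one step along the path, while `v₁` takes the global majority. Under a strict majority of ones,
`v₁` becomes `1` and the shift loses at most the one of `vₙ`, so the number of ones never
decreases and the majority persists; hence after `t` steps the first `t` nodes are `1`. The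
majority-of-zeros case follows because `majStep` commutes with complementation.
-/

section Majority

variable {V : Type*} [DecidableEq V]

lemma onesIn_not (S : Finset V) (x : V → Bool) :
    onesIn S (fun v => !x v) = S.card - onesIn S x := by
  unfold onesIn
  rw [← Finset.card_filter_add_card_filter_not (s := S) (p := fun v => x v = true)]
  simp

lemma onesIn_le_card (S : Finset V) (x : V → Bool) : onesIn S x ≤ S.card :=
  Finset.card_filter_le _ _

variable [Fintype V]

lemma ones_add_zeros (x : V → Bool) : ones x + zeros x = Fintype.card V := by
  simpa [ones, zeros, onesIn] using
    Finset.card_filter_add_card_filter_not (s := Finset.univ) (p := fun v => x v = true)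

lemma ones_not (x : V → Bool) : ones (fun v => !x v) = zeros x := by
  simp [ones, zeros, onesIn]

lemma majStep_of_eq_singleton (N : V → Finset V) (x : V → Bool) {u v : V} (hv : N v = {u}) :
    majStep N x v = x u := by
  cases hu : x u <;> simp [majStep, onesIn, hv, Finset.filter_singleton, hu]

lemma majStep_not (N : V → Finset V) (x : V → Bool) :
    majStep N (fun v => !x v) = fun v => !majStep N x v := by
  funext v
  have hle := onesIn_le_card (N v) x
  simp only [majStep, onesIn_not]
  split_ifs <;> first | rfl | omega

lemma iterate_majStep_not (N : V → Finset V) (x : V → Bool) (t : ℕ) :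
    (majStep N)^[t] (fun v => !x v) = fun v => !(majStep N)^[t] x v := by
  induction t with
  | zero => rfl
  | succ t ih => rw [Function.iterate_succ_apply', Function.iterate_succ_apply', ih, majStep_not]

end Majority

section CompleteCycle

variable {n : ℕ} (x : Fin n → Bool)

lemma majStep_ccN_of_val_eq_zero (hx : n < 2 * ones x) {v : Fin n} (hv : v.val = 0) :
    majStep (ccN n) x v = true := by
  have hN : ccN n v = Finset.univ := if_pos hv
  simp only [majStep, hN, Finset.card_univ, Fintype.card_fin]
  exact if_pos hx

lemma majStep_ccN_of_val_ne_zero {v : Fin n} (hv : v.val ≠ 0) :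
    majStep (ccN n) x v = x ⟨v.val - 1, by omega⟩ := by
  refine majStep_of_eq_singleton _ _ ?_
  ext u
  simp [ccN, hv, Fin.ext_iff]

variable {x}

lemma majStep_ccN_finRotate (hx : n < 2 * ones x) {v : Fin n} (hv : x v = true) :
    majStep (ccN n) x (finRotate n v) = true := by
  obtain ⟨m, rfl⟩ : ∃ m, n = m + 1 := ⟨n - 1, by have := v.isLt; omega⟩
  rcases eq_or_ne v (Fin.last m) with rfl | hlast
  · exact majStep_ccN_of_val_eq_zero x hx (by rw [finRotate_last]; rfl)
  · have hval : (finRotate (m + 1) v).val = v.val + 1 := coe_finRotate_of_ne_last hlast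
    rw [majStep_ccN_of_val_ne_zero _ (by omega)]
    convert hv using 2
    exact Fin.ext (by simp only [hval, Nat.add_sub_cancel])

lemma ones_le_ones_majStep_ccN (hx : n < 2 * ones x) : ones x ≤ ones (majStep (ccN n) x) := by
  unfold ones onesIn
  exact Finset.card_le_card_of_injOn (finRotate n)
    (fun _ hv => by simpa using majStep_ccN_finRotate hx (by simpa using hv))
    (finRotate n).injective.injOn

lemma lt_two_mul_ones_iterate_majStep_ccN (hx : n < 2 * ones x) (t : ℕ) :
    n < 2 * ones ((majStep (ccN n))^[t] x) := by
  induction t with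
  | zero => exact hx
  | succ t ih =>
    rw [Function.iterate_succ_apply']
    exact ih.trans_le (Nat.mul_le_mul_left 2 (ones_le_ones_majStep_ccN ih))

lemma iterate_majStep_ccN_apply_of_val_lt (hx : n < 2 * ones x) {t : ℕ} {v : Fin n}
    (hv : v.val < t) : (majStep (ccN n))^[t] x v = true := by
  induction t generalizing v with
  | zero => omega
  | succ t ih =>
    rw [Function.iterate_succ_apply']
    by_cases hv0 : v.val = 0
    · exact majStep_ccN_of_val_eq_zero _ (lt_two_mul_ones_iterate_majStep_ccN hx t) hv0
    · rw [majStep_ccN_of_val_ne_zero _ hv0]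
      exact ih (by simp only; omega)

lemma iterate_majStep_ccN_eq_true (hx : n < 2 * ones x) :
    (majStep (ccN n))^[n] x = fun _ => true :=
  funext fun v => iterate_majStep_ccN_apply_of_val_lt hx v.isLt

end CompleteCycle

theorem stmt3_general (n : ℕ) :
    (∀ x : Fin n → Bool, zeros x < ones x →
      ∃ t : ℕ, (majStep (ccN n))^[t] x = fun _ => true) ∧
    (∀ x : Fin n → Bool, ones x < zeros x →
      ∃ t : ℕ, (majStep (ccN n))^[t] x = fun _ => false) := by
  have hsum (x : Fin n → Bool) : ones x + zeros x = n := by simpa using ones_add_zeros x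
  refine ⟨fun x hx => ⟨n, iterate_majStep_ccN_eq_true (by have := hsum x; omega)⟩,
    fun x hx => ⟨n, ?_⟩⟩
  have hnot : n < 2 * ones (fun v => !x v) := by
    rw [ones_not]
    have := hsum x
    omega
  have h := iterate_majStep_ccN_eq_true hnot
  rw [iterate_majStep_not] at h
  funext v
  simpa using congrFun h v

/-- the complete cycle majority network solves DCT. -/
theorem stmt3 (n : ℕ) (hn : Odd n) (h3 : 3 ≤ n) :
    (∀ x : Fin n → Bool, zeros x < ones x →
      ∃ t : ℕ, (majStep (ccN n))^[t] x = fun _ => true) ∧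
    (∀ x : Fin n → Bool, ones x < zeros x →
      ∃ t : ℕ, (majStep (ccN n))^[t] x = fun _ => false) :=
  stmt3_general n
end

section
/- Let n ≥ 7 be odd. In the complementary-left-right majority network A on n nodes, if a configuration x has exactly ⌈n/2⌉ ones and all nodes of S = {0,1,...,⌊n/2⌋−2} have state 0 in x, then A(x) has exactly ⌈n/2⌉ ones; moreover all nodes of U have state 1 in A(x) and exactly 2 nodes of R have state 1 in A(x). -/
/-- In-neighborhoods of the complementary-left-right digraph.
With h = ⌊n/2⌋: U = (0,2,...,h-1), R = (1,h,...,n-1), S = (0,...,h-2)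
(so S_j = j, |S| = h-1), T = (h-1,...,n-1) (so T_j = h-1+j, |T| = h+2).
Node U_i sees V minus {S_((i+1) mod |S|), S_((i+2) mod |S|)};
node R_i sees V minus {T_((i-1) mod |T|), T_((i-2) mod |T|)}. -/
def clrN (n : ℕ) (v : Fin n) : Finset (Fin n) :=
  let h := n / 2
  let sLen := h - 1
  let tLen := h + 2
  if v.val = 0 ∨ (2 ≤ v.val ∧ v.val ≤ h - 1) then
    -- v = U_i with i = 0 if v = 0, else i = v - 1
    let i := if v.val = 0 then 0 else v.val - 1
    Finset.univ.filter (fun u : Fin n =>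
      u.val ≠ (i + 1) % sLen ∧ u.val ≠ (i + 2) % sLen)
  else
    -- v = R_i with i = 0 if v = 1, else i = v - h + 1
    let i := if v.val = 1 then 0 else v.val - h + 1
    Finset.univ.filter (fun u : Fin n =>
      u.val ≠ h - 1 + (i + tLen - 1) % tLen ∧
      u.val ≠ h - 1 + (i + tLen - 2) % tLen)

lemma consec_mod_ne (m t : ℕ) (hm : 2 ≤ m) : t % m ≠ (t+1) % m := by
  intro h
  have := (Nat.modEq_iff_dvd' (Nat.le_succ t)).mp h
  simp at this; omega

lemma mod_shift (m o i d : ℕ) (hd : d ≤ m) (hi : i < m) (ho : o < m) :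
    (i + (m - d)) % m = o ↔ i = (o + d) % m := by
  constructor
  · intro hh
    calc i = (i + m) % m := by rw [Nat.add_mod_right, Nat.mod_eq_of_lt hi]
      _ = (i + (m-d) + d) % m := by rw [show i + (m-d) + d = i + m by omega]
      _ = ((i + (m-d)) % m + d) % m := by rw [Nat.mod_add_mod]
      _ = (o + d) % m := by rw [hh]
  · intro hh; subst hh
    calc ((o+d) % m + (m-d)) % m = (o + d + (m-d)) % m := by rw [Nat.mod_add_mod]
      _ = (o + m) % m := by rw [show o + d + (m-d) = o + m by omega]
      _ = o := by rw [Nat.add_mod_right, Nat.mod_eq_of_lt ho]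

lemma card_filter_le (n k : ℕ) (hk : k < n) :
    (Finset.univ.filter (fun v : Fin n => v.val ≤ k)).card = k + 1 := by
  have : (Finset.univ.filter (fun v : Fin n => v.val ≤ k)) = Finset.Iic ⟨k, hk⟩ := by
    ext v; simp [Fin.le_def]
  rw [this, Fin.card_Iic]

lemma clrN_U (n : ℕ) (v : Fin n) (hv : v.val = 0 ∨ (2 ≤ v.val ∧ v.val ≤ n/2 - 1)) :
    clrN n v = Finset.univ.filter (fun u : Fin n =>
      u.val ≠ ((if v.val = 0 then 0 else v.val - 1) + 1) % (n/2 - 1) ∧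
      u.val ≠ ((if v.val = 0 then 0 else v.val - 1) + 2) % (n/2 - 1)) := by
  simp only [clrN]
  rw [if_pos hv]

lemma clrN_R (n : ℕ) (v : Fin n) (hv : ¬(v.val = 0 ∨ (2 ≤ v.val ∧ v.val ≤ n/2 - 1))) :
    clrN n v = Finset.univ.filter (fun u : Fin n =>
      u.val ≠ n/2 - 1 + ((if v.val = 1 then 0 else v.val - n/2 + 1) + (n/2 + 2) - 1) % (n/2 + 2) ∧
      u.val ≠ n/2 - 1 + ((if v.val = 1 then 0 else v.val - n/2 + 1) + (n/2 + 2) - 2) % (n/2 + 2)) := by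
  simp only [clrN]
  rw [if_neg hv]

/-- in the complementary-left-right network, if x has exactly
⌈n/2⌉ ones and all nodes of S = {0,...,⌊n/2⌋-2} are 0, then A(x) has exactly
⌈n/2⌉ ones, all nodes of U are 1 in A(x), and exactly 2 nodes of R are 1
in A(x). -/
theorem stmt8 (n : ℕ) (hn : Odd n) (h7 : 7 ≤ n) (x : Fin n → Bool)
    (hones : ones x = (n + 1) / 2)
    (hS : ∀ v : Fin n, v.val ≤ n / 2 - 2 → x v = false) :
    ones (majStep (clrN n) x) = (n + 1) / 2 ∧
    (∀ v : Fin n, (v.val = 0 ∨ (2 ≤ v.val ∧ v.val ≤ n / 2 - 1)) →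
      majStep (clrN n) x v = true) ∧
    (Finset.univ.filter (fun v : Fin n =>
      (v.val = 1 ∨ n / 2 ≤ v.val) ∧ majStep (clrN n) x v = true)).card = 2 := by
  classical
  obtain ⟨k, hk⟩ := hn
  have hk3 : 3 ≤ k := by omega
  have hn2 : n / 2 = k := by omega
  have hn12 : (n + 1) / 2 = k + 1 := by omega
  -- the set of true nodes
  set T1 : Finset (Fin n) := Finset.univ.filter (fun v => x v = true) with hT1def
  have hT1 : T1.card = k + 1 := by
    have : ones x = T1.card := rfl
    omega
  -- the zero set decomposition and the unique zero z in T
  set SF : Finset (Fin n) := Finset.univ.filter (fun v => v.val ≤ k - 2) with hSFdef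
  have hSF : SF.card = k - 1 := by
    rw [hSFdef, card_filter_le n (k-2) (by omega)]; omega
  set ZF : Finset (Fin n) := Finset.univ.filter (fun v => x v = false) with hZFdef
  have hZF : ZF.card = k := by
    have h1 : ZF = Finset.univ \ T1 := by
      ext v; simp [hZFdef, hT1def]
    have h2 : T1 ⊆ Finset.univ := Finset.subset_univ _
    rw [h1, Finset.card_sdiff_of_subset h2, Finset.card_univ, Fintype.card_fin, hT1]; omega
  have hSZ : SF ⊆ ZF := by
    intro v hv
    simp only [hSFdef, Finset.mem_filter, Finset.mem_univ, true_and] at hv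
    simp only [hZFdef, Finset.mem_filter, Finset.mem_univ, true_and]
    exact hS v (by omega)
  have hone : (ZF \ SF).card = 1 := by
    rw [Finset.card_sdiff_of_subset hSZ, hZF, hSF]; omega
  obtain ⟨z, hz⟩ := Finset.card_eq_one.mp hone
  have hzZF : ZF = SF ∪ {z} := by
    rw [← hz, Finset.union_sdiff_of_subset hSZ]
  have hzlb : k - 1 ≤ z.val := by
    have : z ∈ ZF \ SF := by rw [hz]; simp
    have := (Finset.mem_sdiff.mp this).2
    simp only [hSFdef, Finset.mem_filter, Finset.mem_univ, true_and] at this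
    omega
  have hzub : z.val ≤ 2 * k := by have := z.isLt; omega
  -- characterization of x
  have key : ∀ v : Fin n, x v = true ↔ (k - 1 ≤ v.val ∧ v ≠ z) := by
    intro v
    have hmem : x v = false ↔ (v.val ≤ k - 2 ∨ v = z) := by
      constructor
      · intro hv
        have : v ∈ ZF := by simp [hZFdef, hv]
        rw [hzZF] at this
        simp only [Finset.mem_union, Finset.mem_singleton, hSFdef, Finset.mem_filter,
          Finset.mem_univ, true_and] at this
        exact this
      · intro hv
        rcases hv with hv | hv
        · exact hS v (by omega)
        · subst hv
          have : v ∈ ZF := by rw [hzZF]; simp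
          simpa [hZFdef] using this
    constructor
    · intro hv
      have : ¬ (x v = false) := by simp [hv]
      rw [hmem] at this
      push_neg at this
      exact ⟨by omega, this.2⟩
    · intro ⟨h1, h2⟩
      rcases Bool.eq_false_or_eq_true (x v) with hv | hv
      · exact hv
      · rw [hmem] at hv; rcases hv with hv | hv
        · omega
        · exact absurd hv h2
  -- general evaluation of a majority step
  have maj_eval : ∀ (v : Fin n) (a b : ℕ) (ha : a < n) (hb : b < n), a ≠ b →
      clrN n v = Finset.univ.filter (fun u : Fin n => u.val ≠ a ∧ u.val ≠ b) →
      (majStep (clrN n) x v = true ↔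
        (if x ⟨a, ha⟩ = true then 1 else 0) + (if x ⟨b, hb⟩ = true then 1 else 0) ≤ 1) := by
    intro v a b ha hb hab hNv
    set A : Fin n := ⟨a, ha⟩ with hA
    set B : Fin n := ⟨b, hb⟩ with hB
    have hABne : A ≠ B := by simp [hA, hB, Fin.ext_iff]; omega
    have hNset : clrN n v = Finset.univ \ {A, B} := by
      rw [hNv]; ext u
      simp [hA, hB, Fin.ext_iff]
    have hcard : (clrN n v).card = n - 2 := by
      rw [hNset, Finset.card_sdiff_of_subset (Finset.subset_univ _), Finset.card_univ, Fintype.card_fin,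
        Finset.card_pair hABne]
    have hfil : (clrN n v).filter (fun u => x u = true) = T1 \ {A, B} := by
      rw [hNset]; ext u
      simp only [Finset.mem_filter, Finset.mem_sdiff, Finset.mem_univ, true_and, hT1def]
      tauto
    have hinter : T1 ∩ {A, B} = ({A, B} : Finset (Fin n)).filter (fun u => x u = true) := by
      ext u
      simp only [Finset.mem_inter, Finset.mem_filter, hT1def, Finset.mem_univ, true_and]
      tauto
    have hic : (T1 ∩ {A, B}).card =
        (if x A = true then 1 else 0) + (if x B = true then 1 else 0) := by
      rw [hinter]
      by_cases h1 : x A = true <;> by_cases h2 : x B = true <;>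
        simp [Finset.filter_insert, Finset.filter_singleton, h1, h2, hABne]
    have hones' : onesIn (clrN n v) x =
        (k + 1) - ((if x A = true then 1 else 0) + (if x B = true then 1 else 0)) := by
      have hsub : (T1 \ {A, B}).card + (T1 ∩ {A, B}).card = T1.card :=
        Finset.card_sdiff_add_card_inter _ _
      have : onesIn (clrN n v) x = (T1 \ {A, B}).card := by
        rw [onesIn, hfil]
      omega
    rw [majStep, hcard, hones']
    set c : ℕ := (if x A = true then 1 else 0) + (if x B = true then 1 else 0) with hc
    obtain hc' | hc' | hc' : c = 0 ∨ c = 1 ∨ c = 2 := by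
      rw [hc]; by_cases h1 : x A = true <;> by_cases h2 : x B = true <;> simp [h1, h2]
    · rw [hc', if_pos (by omega)]; simp
    · rw [hc', if_pos (by omega)]; simp
    · rw [hc', if_neg (by omega), if_pos (by omega)]; simp
  -- the U part
  have hU : ∀ v : Fin n, (v.val = 0 ∨ (2 ≤ v.val ∧ v.val ≤ n / 2 - 1)) →
      majStep (clrN n) x v = true := by
    intro v hv
    set i : ℕ := if v.val = 0 then 0 else v.val - 1 with hi
    have ha : (i + 1) % (k - 1) < k - 1 := Nat.mod_lt _ (by omega)
    have hb : (i + 2) % (k - 1) < k - 1 := Nat.mod_lt _ (by omega)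
    have hne : (i + 1) % (k - 1) ≠ (i + 2) % (k - 1) := consec_mod_ne _ (i+1) (by omega)
    have hN := clrN_U n v hv
    rw [hn2] at hN
    rw [maj_eval v _ _ (by omega) (by omega) hne hN]
    rw [hS _ (by simp only []; omega), hS _ (by simp only []; omega)]
    simp
  -- R evaluation
  set o : ℕ := z.val - (k - 1) with ho
  have hom : o < k + 2 := by omega
  have hRval : ∀ v : Fin n, (v.val = 1 ∨ k ≤ v.val) →
      (majStep (clrN n) x v = true ↔
        ((if v.val = 1 then 0 else v.val - k + 1) = (o + 1) % (k + 2) ∨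
         (if v.val = 1 then 0 else v.val - k + 1) = (o + 2) % (k + 2))) := by
    intro v hv
    have hvn : v.val < n := v.isLt
    set i : ℕ := if v.val = 1 then 0 else v.val - k + 1 with hi
    have him : i < k + 2 := by rw [hi]; split <;> omega
    have hnotU : ¬(v.val = 0 ∨ (2 ≤ v.val ∧ v.val ≤ n / 2 - 1)) := by rw [hn2]; omega
    have hN := clrN_R n v hnotU
    rw [hn2, ← hi] at hN
    rw [show i + (k + 2) - 1 = i + k + 1 by omega, show i + (k + 2) - 2 = i + k by omega] at hN
    have ham : (i + k + 1) % (k + 2) < k + 2 := Nat.mod_lt _ (by omega)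
    have hbm : (i + k) % (k + 2) < k + 2 := Nat.mod_lt _ (by omega)
    set a : ℕ := k - 1 + (i + k + 1) % (k + 2) with ha
    set b : ℕ := k - 1 + (i + k) % (k + 2) with hb
    have han : a < n := by omega
    have hbn : b < n := by omega
    have hmodne : (i + k) % (k + 2) ≠ (i + k + 1) % (k + 2) :=
      consec_mod_ne (k + 2) (i + k) (by omega)
    have hab : a ≠ b := by omega
    rw [maj_eval v a b han hbn hab hN]
    have hxa : x ⟨a, han⟩ = true ↔ ¬(a = z.val) := by
      rw [key ⟨a, han⟩]; simp only [ne_eq, Fin.ext_iff]; omega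
    have hxb : x ⟨b, hbn⟩ = true ↔ ¬(b = z.val) := by
      rw [key ⟨b, hbn⟩]; simp only [ne_eq, Fin.ext_iff]; omega
    have hmod1 : (i + k + 1) % (k + 2) = o ↔ i = (o + 1) % (k + 2) := by
      have := mod_shift (k + 2) o i 1 (by omega) him hom
      rwa [show i + ((k + 2) - 1) = i + k + 1 by omega] at this
    have hmod2 : (i + k) % (k + 2) = o ↔ i = (o + 2) % (k + 2) := by
      have := mod_shift (k + 2) o i 2 (by omega) him hom
      rwa [show i + ((k + 2) - 2) = i + k by omega] at this
    rw [← hmod1, ← hmod2]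
    by_cases hb1 : x ⟨a, han⟩ = true <;> by_cases hb2 : x ⟨b, hbn⟩ = true
    · have f1 : ¬(a = z.val) := hxa.mp hb1
      have f2 : ¬(b = z.val) := hxb.mp hb2
      rw [if_pos hb1, if_pos hb2]; omega
    · have f1 : ¬(a = z.val) := hxa.mp hb1
      have f2 : b = z.val := by by_contra hh; exact hb2 (hxb.mpr hh)
      rw [if_pos hb1, if_neg hb2]; omega
    · have f1 : a = z.val := by by_contra hh; exact hb1 (hxa.mpr hh)
      have f2 : ¬(b = z.val) := hxb.mp hb2
      rw [if_neg hb1, if_pos hb2]; omega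
    · have f1 : a = z.val := by by_contra hh; exact hb1 (hxa.mpr hh)
      have f2 : b = z.val := by by_contra hh; exact hb2 (hxb.mpr hh)
      exact absurd (f1.trans f2.symm) hab
  -- the two true R nodes
  set j1 : ℕ := (o + 1) % (k + 2) with hj1
  set j2 : ℕ := (o + 2) % (k + 2) with hj2
  have hj1m : j1 < k + 2 := Nat.mod_lt _ (by omega)
  have hj2m : j2 < k + 2 := Nat.mod_lt _ (by omega)
  have hjne : j1 ≠ j2 := by
    have := consec_mod_ne (k + 2) (o + 1) (by omega)
    rw [hj1, hj2]; rwa [show o + 1 + 1 = o + 2 by omega] at this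
  have hwlt : ∀ j : ℕ, j < k + 2 → (if j = 0 then 1 else k - 1 + j) < n := by
    intro j hjm; split <;> omega
  set v1 : Fin n := ⟨if j1 = 0 then 1 else k - 1 + j1, hwlt j1 hj1m⟩ with hv1
  set v2 : Fin n := ⟨if j2 = 0 then 1 else k - 1 + j2, hwlt j2 hj2m⟩ with hv2
  have hwR : ∀ j : ℕ, j < k + 2 → ((if j = 0 then 1 else k - 1 + j) = 1 ∨
      k ≤ (if j = 0 then 1 else k - 1 + j)) := by
    intro j hjm; split <;> omega
  have hwi : ∀ j : ℕ, j < k + 2 →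
      (if (if j = 0 then 1 else k - 1 + j) = 1 then 0 else (if j = 0 then 1 else k - 1 + j) - k + 1) = j := by
    intro j hjm
    by_cases h0 : j = 0
    · simp [h0]
    · rw [if_neg h0, if_neg (by omega)]; omega
  have hback : ∀ (v : Fin n), (v.val = 1 ∨ k ≤ v.val) → ∀ j : ℕ, j < k + 2 →
      (if v.val = 1 then 0 else v.val - k + 1) = j →
      v.val = (if j = 0 then 1 else k - 1 + j) := by
    intro v hv j hjm hij
    have hvn : v.val < n := v.isLt
    by_cases h1 : v.val = 1
    · rw [if_pos h1] at hij; rw [← hij]; simp; omega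
    · rw [if_neg h1] at hij
      rw [if_neg (by omega)]; omega
  have hF : (Finset.univ.filter (fun v : Fin n =>
      (v.val = 1 ∨ n / 2 ≤ v.val) ∧ majStep (clrN n) x v = true)) = {v1, v2} := by
    ext v
    simp only [Finset.mem_filter, Finset.mem_univ, true_and, Finset.mem_insert,
      Finset.mem_singleton, hn2]
    constructor
    · rintro ⟨hR, hmaj⟩
      rw [hRval v hR] at hmaj
      rcases hmaj with hm1 | hm2
      · left; rw [hv1]; apply Fin.ext; exact hback v hR j1 hj1m hm1
      · right; rw [hv2]; apply Fin.ext; exact hback v hR j2 hj2m hm2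
    · rintro (rfl | rfl)
      · refine ⟨hwR j1 hj1m, ?_⟩
        rw [hRval v1 (hwR j1 hj1m)]
        left; exact hwi j1 hj1m
      · refine ⟨hwR j2 hj2m, ?_⟩
        rw [hRval v2 (hwR j2 hj2m)]
        right; exact hwi j2 hj2m
  have hv12 : v1 ≠ v2 := by
    rw [hv1, hv2, Ne, Fin.ext_iff]
    simp only
    by_cases e1 : j1 = 0
    · rw [if_pos e1]
      by_cases e2 : j2 = 0
      · rw [if_pos e2]; omega
      · rw [if_neg e2]; omega
    · rw [if_neg e1]
      by_cases e2 : j2 = 0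
      · rw [if_pos e2]; omega
      · rw [if_neg e2]; omega
  have hR2 : (Finset.univ.filter (fun v : Fin n =>
      (v.val = 1 ∨ n / 2 ≤ v.val) ∧ majStep (clrN n) x v = true)).card = 2 := by
    rw [hF, Finset.card_insert_of_notMem (by simp [hv12]), Finset.card_singleton]
  refine ⟨?_, hU, hR2⟩
  -- total count
  have hsplit : Finset.univ.filter (fun v : Fin n => majStep (clrN n) x v = true) =
      (Finset.univ.filter (fun v : Fin n =>
        (v.val = 0 ∨ (2 ≤ v.val ∧ v.val ≤ n / 2 - 1)) ∧ majStep (clrN n) x v = true)) ∪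
      (Finset.univ.filter (fun v : Fin n =>
        (v.val = 1 ∨ n / 2 ≤ v.val) ∧ majStep (clrN n) x v = true)) := by
    ext v
    have hvn : v.val < n := v.isLt
    have hPQ : (v.val = 0 ∨ (2 ≤ v.val ∧ v.val ≤ n / 2 - 1)) ∨
        (v.val = 1 ∨ n / 2 ≤ v.val) := by omega
    simp only [Finset.mem_filter, Finset.mem_univ, true_and, Finset.mem_union]
    constructor
    · intro hm
      rcases hPQ with h | h
      · exact Or.inl ⟨h, hm⟩
      · exact Or.inr ⟨h, hm⟩
    · rintro (⟨-, hm⟩ | ⟨-, hm⟩) <;> exact hm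
  have hdisj : Disjoint
      (Finset.univ.filter (fun v : Fin n =>
        (v.val = 0 ∨ (2 ≤ v.val ∧ v.val ≤ n / 2 - 1)) ∧ majStep (clrN n) x v = true))
      (Finset.univ.filter (fun v : Fin n =>
        (v.val = 1 ∨ n / 2 ≤ v.val) ∧ majStep (clrN n) x v = true)) := by
    rw [Finset.disjoint_left]
    intro v h1 h2
    simp only [Finset.mem_filter, Finset.mem_univ, true_and] at h1 h2
    omega
  have hUcard : (Finset.univ.filter (fun v : Fin n =>
      (v.val = 0 ∨ (2 ≤ v.val ∧ v.val ≤ n / 2 - 1)) ∧ majStep (clrN n) x v = true)).card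
      = k - 1 := by
    have e1 : (Finset.univ.filter (fun v : Fin n =>
        (v.val = 0 ∨ (2 ≤ v.val ∧ v.val ≤ n / 2 - 1)) ∧ majStep (clrN n) x v = true)) =
        (Finset.univ.filter (fun v : Fin n => v.val ≤ k - 1)) \ {⟨1, by omega⟩} := by
      ext v
      simp only [Finset.mem_filter, Finset.mem_univ, true_and, Finset.mem_sdiff,
        Finset.mem_singleton, Fin.ext_iff]
      constructor
      · rintro ⟨hP, -⟩; exact ⟨by omega, by omega⟩
      · rintro ⟨hle, hne⟩
        have hP : v.val = 0 ∨ (2 ≤ v.val ∧ v.val ≤ n / 2 - 1) := by omega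
        exact ⟨hP, hU v hP⟩
    rw [e1, Finset.card_sdiff_of_subset (by simp; omega), card_filter_le n (k - 1) (by omega),
      Finset.card_singleton]
    omega
  have : ones (majStep (clrN n) x) =
      (Finset.univ.filter (fun v : Fin n => majStep (clrN n) x v = true)).card := rfl
  rw [this, hsplit, Finset.card_union_of_disjoint hdisj, hUcard, hR2, hn12]
  omega
end

section
/- Let n ≥ 7 be odd and A the two-intersecting-cycles majority network with cross point c. If x has exactly ⌈n/2⌉ ones and x_0 = 1, then the number of ones in A(x) restricted to R = {⌈n/2⌉,...,n−2} equals (number of ones of x in R) + x_{n−1} + x_{⌊n/2⌋} − 1. -/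
/-- In-neighborhoods of the two-intersecting-cycles digraph with cross point c.
With h = ⌊n/2⌋: node 0 has unique in-neighbor c; node i for 1 ≤ i ≤ h has
unique in-neighbor i-1; node j for ⌈n/2⌉ ≤ j ≤ n-2 sees V minus {0, j-h};
node n-1 sees V minus {0, c}. -/
def ticN (n c : ℕ) (v : Fin n) : Finset (Fin n) :=
  let h := n / 2
  if v.val = 0 then Finset.univ.filter (fun u : Fin n => u.val = c)
  else if v.val ≤ h then Finset.univ.filter (fun u : Fin n => u.val = v.val - 1)
  else if v.val = n - 1 then
    Finset.univ.filter (fun u : Fin n => u.val ≠ 0 ∧ u.val ≠ c)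
  else
    Finset.univ.filter (fun u : Fin n => u.val ≠ 0 ∧ u.val ≠ v.val - h)

/-- two-intersecting-cycles network, x with exactly ⌈n/2⌉ ones
and x₀ = 1: the number of ones of A(x) in R = {⌈n/2⌉,...,n-2} equals
(ones of x in R) + x_{n-1} + x_{⌊n/2⌋} - 1 (stated additively over ℕ). -/
theorem stmt15 (n c : ℕ) (hn : Odd n) (h7 : 7 ≤ n)
    (hc1 : (n + 1) / 2 ≤ c) (hc2 : c ≤ n - 2)
    (x : Fin n → Bool) (hones : ones x = (n + 1) / 2)
    (h0 : x ⟨0, by omega⟩ = true) :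
    onesIn (Finset.univ.filter (fun v : Fin n =>
        (n + 1) / 2 ≤ v.val ∧ v.val ≤ n - 2)) (majStep (ticN n c) x) + 1 =
      onesIn (Finset.univ.filter (fun v : Fin n =>
        (n + 1) / 2 ≤ v.val ∧ v.val ≤ n - 2)) x
      + (if x ⟨n - 1, by omega⟩ = true then 1 else 0)
      + (if x ⟨n / 2, by omega⟩ = true then 1 else 0) := by
  classical
  obtain ⟨k, hk⟩ := hn
  have hn2 : n = 2 * (n / 2) + 1 := by omega
  set h : ℕ := n / 2 with hh
  have h3 : 3 ≤ h := by omega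
  set A : Fin n → Bool := majStep (ticN n c) x with hA
  set y : ℕ → Bool := fun i => if hi : i < n then x ⟨i, hi⟩ else false with hy
  set z : ℕ → Bool := fun i => if hi : i < n then A ⟨i, hi⟩ else false with hz
  have hyv : ∀ v : Fin n, x v = y v.val := by
    intro v; simp only [hy, v.isLt, dif_pos, Fin.eta]
  have hzv : ∀ v : Fin n, A v = z v.val := by
    intro v; simp only [hz, v.isLt, dif_pos, Fin.eta]
  set F : ℕ → ℕ := fun i => if y i then 1 else 0 with hF
  set G : ℕ → ℕ := fun i => if z i then 1 else 0 with hG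
  have hF0 : F 0 = 1 := by
    have : y 0 = true := by
      simp only [hy]; rw [dif_pos (by omega : (0:ℕ) < n)]; exact h0
    simp [hF, this]
  have hT : ∑ i ∈ Finset.range n, F i = h + 1 := by
    have h1 : ones x = h + 1 := by rw [hones]; omega
    rw [ones, onesIn, Finset.card_filter] at h1
    rw [← Fin.sum_univ_eq_sum_range F n]
    rw [← h1]
    exact Finset.sum_congr rfl (fun v _ => by rw [hF]; rw [hyv v])
  -- step computation on R
  have hstep : ∀ i : ℕ, h + 1 ≤ i → i ≤ 2 * h - 1 → z i = !y (i - h) := by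
    intro i hi1 hi2
    have hiltn : i < n := by omega
    set m : ℕ := i - h with hm
    have hmn : m < n := by omega
    set v : Fin n := ⟨i, hiltn⟩ with hv
    have hN : ticN n c v = Finset.univ.filter (fun u : Fin n => u.val ≠ 0 ∧ u.val ≠ m) := by
      show (if (v:ℕ) = 0 then _ else if (v:ℕ) ≤ n / 2 then _ else if (v:ℕ) = n - 1 then _ else
        Finset.univ.filter (fun u : Fin n => u.val ≠ 0 ∧ u.val ≠ (v:ℕ) - n / 2)) = _
      rw [if_neg (by simp [hv]; omega), if_neg (by simp [hv]; omega),
        if_neg (by simp [hv]; omega)]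
    have cardN : (Finset.univ.filter (fun u : Fin n => u.val ≠ 0 ∧ u.val ≠ m)).card
        = 2 * h - 1 := by
      rw [Finset.card_filter]
      rw [Fin.sum_univ_eq_sum_range (fun j => if j ≠ 0 ∧ j ≠ m then 1 else 0) n]
      have e : ∀ j ∈ Finset.range n,
          (if j ≠ 0 ∧ j ≠ m then (1:ℕ) else 0)
            + ((if j = 0 then 1 else 0) + (if j = m then 1 else 0)) = 1 := by
        intro j _
        by_cases h1 : j = 0 <;> by_cases h2 : j = m <;> simp [h1, h2] <;> omega
      have esum := Finset.sum_congr rfl e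
      have e0 : ∑ j ∈ Finset.range n, (if j = 0 then (1:ℕ) else 0) = 1 := by
        rw [Finset.sum_ite_eq' (Finset.range n) 0 (fun _ => (1:ℕ))]
        simp; omega
      have em : ∑ j ∈ Finset.range n, (if j = m then (1:ℕ) else 0) = 1 := by
        rw [Finset.sum_ite_eq' (Finset.range n) m (fun _ => (1:ℕ))]
        simp [hmn]
      rw [Finset.sum_add_distrib, Finset.sum_add_distrib, e0, em,
        Finset.sum_const, Finset.card_range, smul_eq_mul, mul_one] at esum
      omega
    have hFm : F m ≤ 1 := by by_cases hb : y m <;> simp [hF, hb]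
    have onesN : onesIn (Finset.univ.filter (fun u : Fin n => u.val ≠ 0 ∧ u.val ≠ m)) x
        = h - F m := by
      have e1 : onesIn (Finset.univ.filter (fun u : Fin n => u.val ≠ 0 ∧ u.val ≠ m)) x
          = ∑ j ∈ Finset.range n, (if (j ≠ 0 ∧ j ≠ m) ∧ y j = true then 1 else 0) := by
        rw [onesIn, Finset.filter_filter, Finset.card_filter]
        rw [← Fin.sum_univ_eq_sum_range
          (fun j => if (j ≠ 0 ∧ j ≠ m) ∧ y j = true then 1 else 0) n]
        exact Finset.sum_congr rfl (fun v _ => by rw [hyv v])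
      have e : ∀ j ∈ Finset.range n,
          (if (j ≠ 0 ∧ j ≠ m) ∧ y j = true then (1:ℕ) else 0)
            + ((if j = 0 then F j else 0) + (if j = m then F j else 0)) = F j := by
        intro j _
        by_cases h1 : j = 0 <;> by_cases h2 : j = m <;>
          by_cases h3 : y j <;> simp [hF, h1, h2, h3] <;>
          (intro hEq; exact absurd hEq (by omega))
      have esum := Finset.sum_congr rfl e
      have e0 : ∑ j ∈ Finset.range n, (if j = 0 then F j else 0) = 1 := by
        rw [Finset.sum_ite_eq' (Finset.range n) 0 F]
        simp only [Finset.mem_range, if_pos (by omega : 0 < n)]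
        exact hF0
      have em : ∑ j ∈ Finset.range n, (if j = m then F j else 0) = F m := by
        rw [Finset.sum_ite_eq' (Finset.range n) m F]
        simp [hmn]
      rw [Finset.sum_add_distrib, Finset.sum_add_distrib, e0, em, hT] at esum
      omega
    have hzi : z i = A v := by simp only [hz, hiltn, dif_pos, hv]
    rw [hzi, hA]
    simp only [majStep]
    rw [hN, cardN, onesN]
    by_cases hb : y m
    · have hf1 : F m = 1 := by simp [hF, hb]
      rw [hf1, if_neg (by omega), if_pos (by omega), hb]
      rfl
    · have hf0 : F m = 0 := by simp [hF, hb]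
      rw [hf0, if_pos (by omega)]
      simp [hb]
  have conv : ∀ (w : Fin n → Bool) (W : ℕ → ℕ),
      (∀ v : Fin n, (if w v = true then (1:ℕ) else 0) = W v.val) →
      onesIn (Finset.univ.filter (fun v : Fin n =>
        (n + 1) / 2 ≤ v.val ∧ v.val ≤ n - 2)) w
        = ∑ i ∈ Finset.Ico (h+1) (2*h), W i := by
    intro w W hw
    rw [onesIn, Finset.filter_filter, Finset.card_filter]
    have e1 : ∀ v : Fin n,
        (if ((n+1)/2 ≤ v.val ∧ v.val ≤ n - 2) ∧ w v = true then (1:ℕ) else 0)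
          = (fun j => if h + 1 ≤ j ∧ j < 2*h then W j else 0) v.val := by
      intro v
      dsimp only
      by_cases hp : h + 1 ≤ (v:ℕ) ∧ (v:ℕ) < 2*h
      · have hiff : (((n+1)/2 ≤ (v:ℕ) ∧ (v:ℕ) ≤ n - 2) ∧ w v = true) ↔ (w v = true) := by
          constructor
          · exact fun hq => hq.2
          · exact fun hq => ⟨⟨by omega, by omega⟩, hq⟩
        rw [if_congr hiff rfl rfl, hw v, if_pos hp]
      · have hnot : ¬ (((n+1)/2 ≤ (v:ℕ) ∧ (v:ℕ) ≤ n - 2) ∧ w v = true) := by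
          rintro ⟨⟨a, b⟩, -⟩
          exact hp ⟨by omega, by omega⟩
        rw [if_neg hnot, if_neg hp]
    rw [Finset.sum_congr rfl (fun v _ => e1 v)]
    rw [Fin.sum_univ_eq_sum_range (fun j => if h + 1 ≤ j ∧ j < 2*h then W j else 0) n]
    rw [← Finset.sum_filter]
    congr 1
    ext j
    simp only [Finset.mem_filter, Finset.mem_range, Finset.mem_Ico]
    omega
  have cA := conv A G (fun v => by rw [hzv v])
  have cx := conv x F (fun v => by rw [hyv v])
  have hkey : (∑ i ∈ Finset.Ico (h+1) (2*h), G i)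
      + (∑ i ∈ Finset.Ico (h+1) (2*h), F (i - h)) = h - 1 := by
    rw [← Finset.sum_add_distrib]
    have e : ∀ i ∈ Finset.Ico (h+1) (2*h), G i + F (i - h) = 1 := by
      intro i hi
      rw [Finset.mem_Ico] at hi
      have hzi := hstep i hi.1 (by omega)
      rw [hG]
      dsimp only
      rw [hzi]
      cases hb : y (i - h) <;> simp [hF, hb]
    rw [Finset.sum_congr rfl e, Finset.sum_const, Nat.card_Ico, smul_eq_mul, mul_one]
    omega
  have hre : ∑ i ∈ Finset.Ico (h+1) (2*h), F (i - h) = ∑ i ∈ Finset.Ico 1 h, F i := by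
    rw [Finset.sum_Ico_eq_sum_range, Finset.sum_Ico_eq_sum_range]
    have e2 : 2*h - (h+1) = h - 1 := by omega
    rw [e2]
    exact Finset.sum_congr rfl (fun j hj => by congr 1; omega)
  have hsplit : ∑ i ∈ Finset.range n, F i
      = F 0 + (∑ i ∈ Finset.Ico 1 h, F i) + F h
        + (∑ i ∈ Finset.Ico (h+1) (2*h), F i) + F (2*h) := by
    rw [Finset.range_eq_Ico]
    rw [← Finset.sum_Ico_consecutive F (by omega : 0 ≤ 2*h) (by omega : 2*h ≤ n)]
    rw [← Finset.sum_Ico_consecutive F (by omega : 0 ≤ h+1) (by omega : h+1 ≤ 2*h)]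
    rw [← Finset.sum_Ico_consecutive F (by omega : 0 ≤ h) (by omega : h ≤ h+1)]
    rw [← Finset.sum_Ico_consecutive F (by omega : 0 ≤ 1) (by omega : 1 ≤ h)]
    have s1 : Finset.Ico 0 1 = {0} := Nat.Ico_succ_singleton 0
    have s2 : Finset.Ico h (h+1) = {h} := Nat.Ico_succ_singleton h
    have s3 : Finset.Ico (2*h) n = {2*h} := by
      rw [show n = 2*h+1 from by omega]
      exact Nat.Ico_succ_singleton (2*h)
    rw [s1, s2, s3, Finset.sum_singleton, Finset.sum_singleton, Finset.sum_singleton]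
  rw [cA, cx]
  have gn1 : (if x ⟨n-1, by omega⟩ = true then (1:ℕ) else 0) = F (2*h) := by
    rw [hyv]
    show (if y (n-1) = true then (1:ℕ) else 0) = F (2*h)
    rw [show n - 1 = 2*h from by omega]
  have gh : (if x ⟨h, by omega⟩ = true then (1:ℕ) else 0) = F h := by
    rw [hyv]
  rw [gn1, gh]
  omega
end
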